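/- Let μ be an ε-product probability measure on V = V₁×⋯×V_k, let S,T ⊆ [k] with S ≠ T, and let f,g : V → ℝ. Then ⟨f^{=S}, g^{=T}⟩ ≤ 2^{2|S|+2|T|}·ε·‖f‖₂·‖g‖₂. -/

import Mathlib

open Finset

namespace GLL

variable {k : ℕ} {V : Fin k → Type} [∀ i, Fintype (V i)] [∀ i, DecidableEq (V i)]

/-- Expectation of `f` with respect to the (finitely supported) measure `μ`. -/
def expect (μ f : (∀ i, V i) → ℝ) : ℝ := ∑ x, μ x * f x

/-- `μ` is a probability measure. -/
def IsProb (μ : (∀ i, V i) → ℝ) : Prop := (∀ x, 0 ≤ μ x) ∧ ∑ x, μ x = 1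

/-- The marginal `μ_S` evaluated at (the `S`-coordinates of) `x`. -/
def marg (μ : (∀ i, V i) → ℝ) (S : Finset (Fin k)) (x : ∀ i, V i) : ℝ :=
  ∑ z, if ∀ i ∈ S, z i = x i then μ z else 0

/-- The link (conditional) measure `μ_x` for `x ∈ V_S`, viewed as a measure on
full points agreeing with `x` on `S`. -/
noncomputable def cond (μ : (∀ i, V i) → ℝ) (S : Finset (Fin k)) (x z : ∀ i, V i) : ℝ :=
  if ∀ i ∈ S, z i = x i then μ z / marg μ S x else 0

/-- The averaging operator `A_S`: `A_S f (x) = E_{y ∼ μ_{x_S}} [f(x_S, y)]`.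
Applied to an `S'`-junta `f`, this is also the operator `A_{S',S}`. -/
noncomputable def Aop (μ : (∀ i, V i) → ℝ) (S : Finset (Fin k)) (f : (∀ i, V i) → ℝ)
    (x : ∀ i, V i) : ℝ :=
  ∑ z, cond μ S x z * f z

/-- The Efron–Stein component `f^{=S} = ∑_{T ⊆ S} (-1)^{|S∖T|} A_T f`. -/
noncomputable def ES (μ : (∀ i, V i) → ℝ) (S : Finset (Fin k)) (f : (∀ i, V i) → ℝ)
    (x : ∀ i, V i) : ℝ :=
  ∑ T ∈ S.powerset, (-1 : ℝ) ^ (S.card - T.card) * Aop μ T f x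

/-- The low-degree part `f^{≤ d} = ∑_{|S| ≤ d} f^{=S}`. -/
noncomputable def lowPart (μ : (∀ i, V i) → ℝ) (d : ℕ) (f : (∀ i, V i) → ℝ)
    (x : ∀ i, V i) : ℝ :=
  ∑ S ∈ univ.powerset.filter (fun S : Finset (Fin k) => S.card ≤ d), ES μ S f x

/-- The Laplacian `L_S[f] = ∑_{T ⊇ S} f^{=T}`. -/
noncomputable def Lap (μ : (∀ i, V i) → ℝ) (S : Finset (Fin k)) (f : (∀ i, V i) → ℝ)
    (x : ∀ i, V i) : ℝ :=
  ∑ T ∈ univ.powerset.filter (fun T : Finset (Fin k) => S ⊆ T), ES μ T f x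

/-- The truncated Laplacian `L_S^{≤d}[f] = ∑_{T ⊇ S, |T| ≤ d} f^{=T}`. -/
noncomputable def LapLe (μ : (∀ i, V i) → ℝ) (d : ℕ) (S : Finset (Fin k))
    (f : (∀ i, V i) → ℝ) (x : ∀ i, V i) : ℝ :=
  ∑ T ∈ univ.powerset.filter (fun T : Finset (Fin k) => S ⊆ T ∧ T.card ≤ d), ES μ T f x

/-- The influence `I_{S,x}[f] = ‖L_S[f](x,·)‖²_{L²(μ_x)}`. -/
noncomputable def Inf (μ : (∀ i, V i) → ℝ) (S : Finset (Fin k)) (f : (∀ i, V i) → ℝ)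
    (x : ∀ i, V i) : ℝ :=
  ∑ z, cond μ S x z * (Lap μ S f z) ^ 2

/-- The truncated influence `I^{≤d}_{S,x}[f] = ‖L_S^{≤d}[f](x,·)‖²_{L²(μ_x)}`. -/
noncomputable def InfLe (μ : (∀ i, V i) → ℝ) (d : ℕ) (S : Finset (Fin k))
    (f : (∀ i, V i) → ℝ) (x : ∀ i, V i) : ℝ :=
  ∑ z, cond μ S x z * (LapLe μ d S f z) ^ 2

/-- `‖f‖₂²` with respect to `μ`. -/
def normSq (μ f : (∀ i, V i) → ℝ) : ℝ := ∑ x, μ x * (f x) ^ 2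

/-- `‖f‖₄⁴` with respect to `μ`. -/
def norm4p4 (μ f : (∀ i, V i) → ℝ) : ℝ := ∑ x, μ x * (f x) ^ 4

/-- `‖f‖₂` with respect to `μ`. -/
noncomputable def l2norm (μ f : (∀ i, V i) → ℝ) : ℝ := Real.sqrt (normSq μ f)

/-- `‖f‖_∞`: the maximum of `|f|` over the support of `μ`. -/
noncomputable def supNorm (μ f : (∀ i, V i) → ℝ) : ℝ :=
  sSup ((fun x => |f x|) '' {x | 0 < μ x})

/-- Inner product `⟨f, g⟩ = E_{x∼μ}[f(x) g(x)]`. -/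
def inner' (μ f g : (∀ i, V i) → ℝ) : ℝ := ∑ x, μ x * (f x * g x)

/-- The pair `{i,j}`-skeleton of `μ` is `ε`-pseudorandom. -/
def PairPseudo (μ : (∀ i, V i) → ℝ) (ε : ℝ) (i j : Fin k) : Prop :=
  ∀ (f₁ : V i → ℝ) (f₂ : V j → ℝ),
    |expect μ (fun x => f₁ (x i) * f₂ (x j)) -
        expect μ (fun x => f₁ (x i)) * expect μ (fun x => f₂ (x j))| ≤
      ε * Real.sqrt
        ((expect μ (fun x => f₁ (x i) ^ 2) - expect μ (fun x => f₁ (x i)) ^ 2) *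
          (expect μ (fun x => f₂ (x j) ^ 2) - expect μ (fun x => f₂ (x j)) ^ 2))

/-- `μ` is an `ε`-product measure: every link of every restriction of size `≤ k - 2`
has `ε`-pseudorandom skeletons. -/
def EpsProduct (μ : (∀ i, V i) → ℝ) (ε : ℝ) : Prop :=
  ∀ S : Finset (Fin k), S.card ≤ k - 2 → ∀ x, 0 < marg μ S x →
    ∀ i j : Fin k, i ∉ S → j ∉ S → i ≠ j → PairPseudo (cond μ S x) ε i j

/-- `‖f(x,·)‖_{L²(μ_x)}` for `x ∈ V_S`. -/
noncomputable def restrictNorm (μ : (∀ i, V i) → ℝ) (S : Finset (Fin k)) (x : ∀ i, V i)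
    (f : (∀ i, V i) → ℝ) : ℝ :=
  Real.sqrt (∑ z, cond μ S x z * (f z) ^ 2)

/-- `f` is `(d, δ)`-global: all restrictions of at most `d` coordinates have
`2`-norm at most `δ`. -/
def IsGlobal (μ : (∀ i, V i) → ℝ) (d : ℕ) (δ : ℝ) (f : (∀ i, V i) → ℝ) : Prop :=
  ∀ S : Finset (Fin k), S.card ≤ d → ∀ x, 0 < marg μ S x → restrictNorm μ S x f ≤ δ

/-- `f` is an `S`-junta: it depends only on the coordinates in `S`. -/
def Junta (S : Finset (Fin k)) (f : (∀ i, V i) → ℝ) : Prop :=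
  ∀ x y, (∀ i ∈ S, x i = y i) → f x = f y

/-- The noise operator `T_ρ f = ∑_{S ⊆ [k]} ρ^{|S|} (1-ρ)^{k-|S|} A_S f`. -/
noncomputable def noiseOp (μ : (∀ i, V i) → ℝ) (ρ : ℝ) (f : (∀ i, V i) → ℝ)
    (x : ∀ i, V i) : ℝ :=
  ∑ S ∈ (univ : Finset (Fin k)).powerset, ρ ^ S.card * (1 - ρ) ^ (k - S.card) * Aop μ S f x

/-- The up-down walk operator `T = (1/k) ∑_{i=1}^k A_{[k]∖{i}}`. -/
noncomputable def upDown (μ : (∀ i, V i) → ℝ) (f : (∀ i, V i) → ℝ) (x : ∀ i, V i) : ℝ :=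
  (1 / (k : ℝ)) * ∑ i : Fin k, Aop μ (univ.erase i) f x

/-- The product measure `μ₁ ⊗ ⋯ ⊗ μ_k`. -/
def prodMeasure (μi : ∀ i, V i → ℝ) : (∀ i, V i) → ℝ := fun x => ∏ i, μi i (x i)

/-- `f` has degree at most `d`: `f^{=S} = 0` whenever `|S| > d`. -/
def DegLe (μ : (∀ i, V i) → ℝ) (d : ℕ) (f : (∀ i, V i) → ℝ) : Prop :=
  ∀ S : Finset (Fin k), d < S.card → ∀ x, ES μ S f x = 0

/-- `{F S}_{S ⊆ [k]}` is an `(α, ε')`-approximate Efron–Stein decomposition of `f`. -/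
noncomputable def ApproxES (μ : (∀ i, V i) → ℝ) (α ε' : ℝ) (f : (∀ i, V i) → ℝ)
    (F : Finset (Fin k) → (∀ i, V i) → ℝ) : Prop :=
  l2norm μ f ≤ α ∧
    l2norm μ (fun x => f x - ∑ S ∈ (univ : Finset (Fin k)).powerset, F S x) ≤ ε' ∧
    ∀ S : Finset (Fin k), ∃ h : (∀ i, V i) → ℝ,
      l2norm μ h ≤ α ∧ l2norm μ (fun x => ES μ S h x - F S x) ≤ ε'

/-!
Swapping `(S, f)` and `(T, g)` if necessary, take `i ∈ T \ S`. Then `g^{=T}` is a signed sum of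
the `2^{|T|-1}` differences `(A_{B ∪ {i}} - A_B) g` with `B ⊆ T \ {i}`, and `f^{=S}` a signed sum
of the `2^{|S|}` juntas `A_A f` with `A ⊆ S`. By self-adjointness each cross term is
`⟨(A_{B ∪ {i}} - A_B) h, g⟩` for an `A`-junta `h` with `i ∉ A`, so it suffices that
`‖(A_{B ∪ {i}} - A_B) h‖ ≤ |A| ε ‖h‖`.

In the link of `μ` at `x_B` the function `(A_{B ∪ {i}} - A_B) h` is a centred function of the
coordinate `i` whose variance equals its covariance with `h`. The covariance of a function of
coordinate `i` with a `C`-junta is at most `|C| ε` times the two standard deviations, by induction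
on `C`: the law of total covariance, conditioning on one `j ∈ C`, splits it into a covariance on the
`{i, j}`-skeleton, bounded by pseudorandomness, and an average of covariances in the links at
`x_{B ∪ {j}}`, bounded by induction, Cauchy–Schwarz and the law of total variance.
-/

section Expectation

omit [∀ i, DecidableEq (V i)]

variable {ν : (∀ i, V i) → ℝ} {F G : (∀ i, V i) → ℝ}

lemma expect_congr (h : ∀ z, ν z ≠ 0 → F z = G z) : expect ν F = expect ν G :=
  sum_congr rfl fun z _ => by
    by_cases hz : ν z = 0
    · simp [hz]
    · rw [h z hz]

lemma expect_add : expect ν (fun z => F z + G z) = expect ν F + expect ν G := by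
  simp [expect, mul_add, sum_add_distrib]

lemma expect_sub : expect ν (fun z => F z - G z) = expect ν F - expect ν G := by
  simp [expect, mul_sub, sum_sub_distrib]

lemma expect_const_mul (c : ℝ) : expect ν (fun z => c * F z) = c * expect ν F := by
  simp only [expect, mul_sum]
  exact sum_congr rfl fun z _ => by ring

lemma expect_mul_const (c : ℝ) : expect ν (fun z => F z * c) = expect ν F * c := by
  simp only [expect, sum_mul]
  exact sum_congr rfl fun z _ => by ring

lemma expect_const (hν : IsProb ν) (c : ℝ) : expect ν (fun _ => c) = c := by
  simp [expect, ← sum_mul, hν.2]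

lemma expect_nonneg (h0 : ∀ z, 0 ≤ ν z) (hF : ∀ z, ν z ≠ 0 → 0 ≤ F z) : 0 ≤ expect ν F :=
  sum_nonneg fun z _ => by
    by_cases hz : ν z = 0
    · simp [hz]
    · exact mul_nonneg (h0 z) (hF z hz)

lemma expect_mono (h0 : ∀ z, 0 ≤ ν z) (h : ∀ z, ν z ≠ 0 → F z ≤ G z) :
    expect ν F ≤ expect ν G := by
  have := expect_nonneg h0 fun z hz => sub_nonneg.2 (h z hz)
  rwa [expect_sub, sub_nonneg] at this

lemma abs_expect_le (h0 : ∀ z, 0 ≤ ν z) : |expect ν F| ≤ expect ν (fun z => |F z|) :=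
  (abs_sum_le_sum_abs _ _).trans_eq <| sum_congr rfl fun z _ => by
    rw [abs_mul, abs_of_nonneg (h0 z)]

lemma abs_expect_mul_le (h0 : ∀ z, 0 ≤ ν z) :
    |expect ν (fun z => F z * G z)| ≤
      √(expect ν (fun z => F z ^ 2)) * √(expect ν (fun z => G z ^ 2)) := by
  have hcs := sum_mul_sq_le_sq_mul_sq univ (fun z => √(ν z) * F z) (fun z => √(ν z) * G z)
  have hsq : ∀ z, √(ν z) ^ 2 = ν z := fun z => Real.sq_sqrt (h0 z)
  simp only [mul_pow, hsq, show ∀ z, √(ν z) * F z * (√(ν z) * G z) = √(ν z) ^ 2 * (F z * G z)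
    from fun z => by ring] at hcs
  rw [← Real.sqrt_mul (expect_nonneg h0 fun z _ => sq_nonneg _), ← Real.sqrt_sq_eq_abs]
  exact Real.sqrt_le_sqrt hcs

end Expectation

section Link

variable {μ : (∀ i, V i) → ℝ} {B D : Finset (Fin k)} {x z : ∀ i, V i} {w : (∀ i, V i) → ℝ}

omit [∀ i, Fintype (V i)] [∀ i, DecidableEq (V i)] in
lemma Junta.mono (hw : Junta B w) (hBD : B ⊆ D) : Junta D w :=
  fun x y hxy => hw x y fun i hi => hxy i (hBD hi)

lemma marg_nonneg (h0 : ∀ z, 0 ≤ μ z) : 0 ≤ marg μ B x :=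
  sum_nonneg fun z _ => by split <;> simp [h0 z]

lemma le_marg (h0 : ∀ z, 0 ≤ μ z) (hz : ∀ i ∈ B, z i = x i) : μ z ≤ marg μ B x := by
  have := single_le_sum (f := fun w => if ∀ i ∈ B, w i = x i then μ w else 0)
    (fun w _ => by split <;> simp [h0 w]) (mem_univ z)
  rwa [if_pos hz] at this

lemma marg_pos (h0 : ∀ z, 0 ≤ μ z) (hx : μ x ≠ 0) : 0 < marg μ B x :=
  ((h0 x).lt_of_ne' hx).trans_le (le_marg h0 fun _ _ => rfl)

lemma marg_congr (hz : ∀ i ∈ B, z i = x i) : marg μ B z = marg μ B x :=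
  sum_congr rfl fun w _ => by
    congr 1
    exact propext (forall₂_congr fun i hi => by rw [hz i hi])

lemma cond_congr (hz : ∀ i ∈ B, z i = x i) : cond μ B z = cond μ B x := by
  funext w
  unfold cond
  rw [marg_congr hz]
  congr 1
  exact propext (forall₂_congr fun i hi => by rw [hz i hi])

lemma cond_nonneg (h0 : ∀ z, 0 ≤ μ z) : 0 ≤ cond μ B x z := by
  unfold cond
  split
  · exact div_nonneg (h0 z) (marg_nonneg h0)
  · exact le_rfl

lemma cond_ne_zero (h : cond μ B x z ≠ 0) : (∀ i ∈ B, z i = x i) ∧ μ z ≠ 0 := by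
  unfold cond at h
  split at h
  · exact ⟨‹_›, fun h' => h (by simp [h'])⟩
  · exact absurd rfl h

lemma isProb_cond (h0 : ∀ z, 0 ≤ μ z) (hm : 0 < marg μ B x) : IsProb (cond μ B x) := by
  refine ⟨fun _ => cond_nonneg h0, ?_⟩
  have hcond : ∀ z, cond μ B x z = (if ∀ i ∈ B, z i = x i then μ z else 0) / marg μ B x :=
    fun z => by unfold cond; split <;> simp
  simp_rw [hcond, ← sum_div]
  exact div_self hm.ne'

end Link

section Averaging

variable {μ : (∀ i, V i) → ℝ} {B D : Finset (Fin k)} {x y z : ∀ i, V i}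
  {F G w : (∀ i, V i) → ℝ}

lemma Aop_eq_expect : Aop μ B F x = expect (cond μ B x) F := rfl

lemma junta_Aop : Junta B (Aop μ B F) := fun x z hxz => by
  unfold Aop
  rw [cond_congr hxz]

lemma Aop_junta_mul (hw : Junta B w) : Aop μ B (fun z => w z * F z) x = w x * Aop μ B F x := by
  simp only [Aop, mul_sum]
  refine sum_congr rfl fun z _ => ?_
  by_cases hz : cond μ B x z = 0
  · simp [hz]
  · rw [hw z x (cond_ne_zero hz).1]
    ring

lemma mul_cond_comm (x z : ∀ i, V i) : μ x * cond μ B x z = μ z * cond μ B z x := by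
  unfold cond
  by_cases hc : ∀ i ∈ B, z i = x i
  · rw [if_pos hc, if_pos fun i hi => (hc i hi).symm, marg_congr hc]
    ring
  · rw [if_neg hc, if_neg fun h => hc fun i hi => (h i hi).symm, mul_zero, mul_zero]

lemma sum_mul_cond (h0 : ∀ z, 0 ≤ μ z) (z : ∀ i, V i) : ∑ x, μ x * cond μ B x z = μ z := by
  simp_rw [mul_cond_comm _ z, ← mul_sum]
  rcases (h0 z).eq_or_lt' with hz | hz
  · simp [hz]
  · rw [(isProb_cond h0 (marg_pos h0 hz.ne')).2, mul_one]

lemma expect_Aop (h0 : ∀ z, 0 ≤ μ z) : expect μ (Aop μ B F) = expect μ F := by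
  simp only [expect, Aop, mul_sum]
  rw [sum_comm]
  refine sum_congr rfl fun z _ => ?_
  simp_rw [← mul_assoc, ← sum_mul, sum_mul_cond h0]

lemma expect_junta_mul_Aop (h0 : ∀ z, 0 ≤ μ z) (hw : Junta B w) :
    expect μ (fun z => w z * Aop μ B F z) = expect μ (fun z => w z * F z) := by
  simp_rw [← Aop_junta_mul hw]
  exact expect_Aop h0

lemma expect_Aop_mul (h0 : ∀ z, 0 ≤ μ z) :
    expect μ (fun z => Aop μ B F z * G z) = expect μ (fun z => F z * Aop μ B G z) := by
  calc expect μ (fun z => Aop μ B F z * G z)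
      = expect μ (fun z => Aop μ B G z * Aop μ B F z) := by
        rw [← expect_junta_mul_Aop h0 junta_Aop]
        exact expect_congr fun _ _ => mul_comm _ _
    _ = expect μ (fun z => F z * Aop μ B G z) := by
        rw [expect_junta_mul_Aop h0 junta_Aop]
        exact expect_congr fun _ _ => mul_comm _ _

omit [∀ i, Fintype (V i)] [∀ i, DecidableEq (V i)] in
lemma agree_union_iff (hy : ∀ i ∈ B, y i = x i) :
    (∀ i ∈ B ∪ D, z i = y i) ↔ (∀ i ∈ D, z i = y i) ∧ ∀ i ∈ B, z i = x i := by
  simp only [mem_union, or_imp, forall_and]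
  exact ⟨fun h => ⟨h.2, fun i hi => (h.1 i hi).trans (hy i hi)⟩,
    fun h => ⟨fun i hi => (h.2 i hi).trans (hy i hi).symm, h.1⟩⟩

lemma marg_cond (hy : ∀ i ∈ B, y i = x i) :
    marg (cond μ B x) D y = marg μ (B ∪ D) y / marg μ B x := by
  simp only [marg, cond, sum_div]
  refine sum_congr rfl fun z _ => ?_
  rw [if_congr (agree_union_iff hy) rfl rfl]
  split_ifs <;> simp_all

lemma cond_cond (hm : 0 < marg μ B x) (hy : ∀ i ∈ B, y i = x i) :
    cond (cond μ B x) D y = cond μ (B ∪ D) y := by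
  funext z
  change (if ∀ i ∈ D, z i = y i then cond μ B x z / marg (cond μ B x) D y else 0) = _
  rw [marg_cond hy]
  unfold cond
  rw [if_congr (agree_union_iff hy) rfl rfl]
  split_ifs <;> simp_all [div_div_div_cancel_right₀ hm.ne']

end Averaging

noncomputable def var (ν F : (∀ i, V i) → ℝ) : ℝ :=
  expect ν (fun z => F z ^ 2) - expect ν F ^ 2

noncomputable def cov (ν F G : (∀ i, V i) → ℝ) : ℝ :=
  expect ν (fun z => F z * G z) - expect ν F * expect ν G

section Variance

variable {ν : (∀ i, V i) → ℝ} {D : Finset (Fin k)} {y : ∀ i, V i} {F G : (∀ i, V i) → ℝ}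

omit [∀ i, DecidableEq (V i)] in
lemma cov_self : cov ν F F = var ν F := by
  simp only [cov, var, sq]

omit [∀ i, DecidableEq (V i)] in
lemma cov_comm : cov ν F G = cov ν G F := by
  simp only [cov, mul_comm]

omit [∀ i, DecidableEq (V i)] in
lemma var_nonneg (hν : IsProb ν) : 0 ≤ var ν F := by
  have h := abs_expect_mul_le (G := fun _ => 1) hν.1 (F := F)
  simp only [mul_one, one_pow, expect_const hν, Real.sqrt_one] at h
  rw [var, sub_nonneg, ← sq_abs]
  calc |expect ν F| ^ 2 ≤ √(expect ν (fun z => F z ^ 2)) ^ 2 := by gcongr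
    _ = _ := Real.sq_sqrt (expect_nonneg hν.1 fun z _ => sq_nonneg _)

omit [∀ i, DecidableEq (V i)] in
lemma var_le_expect_sq : var ν F ≤ expect ν (fun z => F z ^ 2) :=
  sub_le_self _ (sq_nonneg _)

omit [∀ i, DecidableEq (V i)] in
lemma expect_sub_expect_sq (hν : IsProb ν) :
    expect ν (fun z => (F z - expect ν F) ^ 2) = var ν F := by
  simp only [sub_sq, expect_add, expect_sub, expect_mul_const, expect_const_mul,
    expect_const hν, var]
  ring

lemma var_cond_nonneg (h0 : ∀ z, 0 ≤ ν z) (hy : ν y ≠ 0) : 0 ≤ var (cond ν D y) F :=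
  var_nonneg (isProb_cond h0 (marg_pos h0 hy))

lemma cov_Aop_left_self (h0 : ∀ z, 0 ≤ ν z) : cov ν (Aop ν D F) F = var ν (Aop ν D F) := by
  rw [cov, var, expect_Aop h0, ← expect_junta_mul_Aop h0 junta_Aop]
  simp only [sq]

lemma cov_eq_expect_cov_cond_add (h0 : ∀ z, 0 ≤ ν z) :
    cov ν F G = expect ν (fun y => cov (cond ν D y) F G) + cov ν F (Aop ν D G) := by
  have hcond : expect ν (fun y => cov (cond ν D y) F G) =
      expect ν (fun z => F z * G z) - expect ν (fun z => Aop ν D F z * Aop ν D G z) := by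
    simp only [cov, ← Aop_eq_expect]
    rw [expect_sub, expect_Aop h0]
  have hmul : expect ν (fun z => F z * Aop ν D G z) =
      expect ν (fun z => Aop ν D F z * Aop ν D G z) := by
    rw [← expect_Aop_mul h0, expect_junta_mul_Aop h0 junta_Aop]
  rw [hcond, cov, cov, hmul, expect_Aop h0]
  ring

lemma var_eq_expect_var_cond_add (h0 : ∀ z, 0 ≤ ν z) :
    var ν F = expect ν (fun y => var (cond ν D y) F) + var ν (Aop ν D F) := by
  have h := cov_eq_expect_cov_cond_add (D := D) (F := F) (G := F) h0
  rw [cov_self, cov_comm, cov_Aop_left_self h0] at h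
  simpa only [cov_self] using h

lemma expect_var_cond_le (hν : IsProb ν) :
    expect ν (fun y => var (cond ν D y) F) ≤ var ν F := by
  rw [var_eq_expect_var_cond_add hν.1 (D := D)]
  linarith [var_nonneg hν (F := Aop ν D F)]

lemma var_Aop_le (hν : IsProb ν) : var ν (Aop ν D F) ≤ var ν F := by
  rw [var_eq_expect_var_cond_add hν.1 (D := D) (F := F)]
  linarith [expect_nonneg hν.1 fun y hy => var_cond_nonneg (D := D) (F := F) hν.1 hy]

end Variance

omit [∀ i, Fintype (V i)] [∀ i, DecidableEq (V i)] in
lemma exists_eq_comp_eval_of_junta_singleton {j : Fin k} {w : (∀ i, V i) → ℝ}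
    (hw : Junta {j} w) : ∃ w' : V j → ℝ, w = fun z => w' (z j) := by
  rcases isEmpty_or_nonempty (∀ i, V i) with he | ⟨⟨z₀⟩⟩
  · exact ⟨0, funext fun z => he.elim z⟩
  · exact ⟨fun b => w (Function.update z₀ j b), funext fun z => hw _ _ (by simp)⟩

lemma card_le_sub_two {B : Finset (Fin k)} {i j : Fin k} (hiB : i ∉ B) (hjB : j ∉ B)
    (hij : i ≠ j) : B.card ≤ k - 2 := by
  have h := card_le_univ (insert i (insert j B))
  rw [card_insert_of_notMem (by simp [hij, hiB]), card_insert_of_notMem hjB,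
    Fintype.card_fin] at h
  omega

section CovarianceBound

variable {μ ν : (∀ i, V i) → ℝ} {ε c : ℝ} {B D : Finset (Fin k)} {x : ∀ i, V i}
  {F G v : (∀ i, V i) → ℝ}

lemma abs_cov_Aop_singleton_le (hν : IsProb ν) (hε : 0 ≤ ε) {i j : Fin k}
    (hPP : PairPseudo ν ε i j) (u : V i → ℝ) :
    |cov ν (fun z => u (z i)) (Aop ν {j} v)| ≤
      ε * (√(var ν (fun z => u (z i))) * √(var ν v)) := by
  have hvar := var_Aop_le hν (D := {j}) (F := v)
  obtain ⟨w, hw⟩ := exists_eq_comp_eval_of_junta_singleton (junta_Aop (μ := ν) (F := v))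
  rw [hw] at hvar ⊢
  calc _ ≤ ε * √(var ν (fun z => u (z i)) * var ν (fun z => w (z j))) := hPP u w
    _ ≤ ε * (√(var ν (fun z => u (z i))) * √(var ν v)) := by
        rw [← Real.sqrt_mul (var_nonneg hν)]
        gcongr
        exact var_nonneg hν

lemma abs_expect_le_of_abs_le_sqrt_var_cond (hν : IsProb ν) (hc : 0 ≤ c)
    {Φ : (∀ i, V i) → ℝ}
    (hΦ : ∀ y, ν y ≠ 0 → |Φ y| ≤ c * (√(var (cond ν D y) F) * √(var (cond ν D y) G))) :
    |expect ν Φ| ≤ c * (√(var ν F) * √(var ν G)) := by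
  have hsq : ∀ H : (∀ i, V i) → ℝ, expect ν (fun y => √(var (cond ν D y) H) ^ 2) =
      expect ν (fun y => var (cond ν D y) H) :=
    fun H => expect_congr fun y hy => Real.sq_sqrt (var_cond_nonneg hν.1 hy)
  calc |expect ν Φ|
      ≤ expect ν (fun y => c * (√(var (cond ν D y) F) * √(var (cond ν D y) G))) :=
        (abs_expect_le hν.1).trans (expect_mono hν.1 hΦ)
    _ ≤ c * (√(expect ν (fun y => var (cond ν D y) F)) *
          √(expect ν (fun y => var (cond ν D y) G))) := by
        rw [expect_const_mul, ← hsq, ← hsq]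
        exact mul_le_mul_of_nonneg_left ((le_abs_self _).trans (abs_expect_mul_le hν.1)) hc
    _ ≤ c * (√(var ν F) * √(var ν G)) := by
        gcongr <;> exact expect_var_cond_le hν

lemma cov_cond_eq_zero_of_junta (h0 : ∀ z, 0 ≤ μ z) (hm : 0 < marg μ B x) (hv : Junta B v) :
    cov (cond μ B x) F v = 0 := by
  have hvx : ∀ z, cond μ B x z ≠ 0 → v z = v x := fun z hz => hv z x (cond_ne_zero hz).1
  rw [cov, expect_congr (G := fun _ => v x) hvx, expect_const (isProb_cond h0 hm),
    expect_congr (G := fun z => F z * v x) fun z hz => by rw [hvx z hz], expect_mul_const, sub_self]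

/-- The coordinates in `B` are frozen in the link, so `v` only has to be a `(B ∪ C)`-junta; this
set does not change in the induction step `(B, C) ↦ (B ∪ {j}, C \ {j})`. -/
theorem abs_cov_cond_le (hμ : IsProb μ) (hprod : EpsProduct μ ε) (hε : 0 ≤ ε) {i : Fin k}
    (u : V i → ℝ) (C : Finset (Fin k)) (hBC : Disjoint B C) (hm : 0 < marg μ B x)
    (hiB : i ∉ B) (hiC : i ∉ C) (hv : Junta (B ∪ C) v) :
    |cov (cond μ B x) (fun z => u (z i)) v| ≤
      C.card * ε * (√(var (cond μ B x) (fun z => u (z i))) * √(var (cond μ B x) v)) := by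
  induction C using Finset.strongInduction generalizing B x v with
  | H C ih =>
  have hν := isProb_cond hμ.1 hm
  rcases C.eq_empty_or_nonempty with rfl | ⟨j, hj⟩
  · rw [union_empty] at hv
    simp [cov_cond_eq_zero_of_junta hμ.1 hm hv]
  have hjB : j ∉ B := disjoint_right.1 hBC hj
  have hij : i ≠ j := fun h => hiC (h ▸ hj)
  have hPP := hprod B (card_le_sub_two hiB hjB hij) x hm i j hiB hjB hij
  have hlink : ∀ y, cond μ B x y ≠ 0 →
      |cov (cond (cond μ B x) {j} y) (fun z => u (z i)) v| ≤ (C.erase j).card * ε *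
        (√(var (cond (cond μ B x) {j} y) (fun z => u (z i))) *
          √(var (cond (cond μ B x) {j} y) v)) := by
    intro y hy
    obtain ⟨hyx, hμy⟩ := cond_ne_zero hy
    rw [cond_cond hm hyx]
    refine ih _ (erase_ssubset hj) ?_ (marg_pos hμ.1 hμy) ?_ (fun h => hiC (mem_of_mem_erase h)) ?_
    · exact disjoint_union_left.2 ⟨hBC.mono_right (erase_subset _ _),
        disjoint_singleton_left.2 (notMem_erase j C)⟩
    · simp [hiB, hij]
    · rwa [union_assoc, singleton_union, insert_erase hj]
  have hcard : (C.card : ℝ) = (C.erase j).card + 1 := by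
    rw [card_erase_of_mem hj, Nat.cast_sub (card_pos.2 ⟨j, hj⟩)]
    ring
  rw [cov_eq_expect_cov_cond_add hν.1 (D := {j})]
  calc _ ≤ _ := abs_add_le _ _
    _ ≤ (C.erase j).card * ε * (√(var (cond μ B x) (fun z => u (z i))) *
          √(var (cond μ B x) v)) +
        ε * (√(var (cond μ B x) (fun z => u (z i))) * √(var (cond μ B x) v)) :=
      add_le_add (abs_expect_le_of_abs_le_sqrt_var_cond hν (by positivity) hlink)
        (abs_cov_Aop_singleton_le hν hε hPP u)
    _ = _ := by rw [hcard]; ring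

end CovarianceBound

lemma le_sq_mul_of_le_mul_sqrt_mul_sqrt {a b c : ℝ} (hc : 0 ≤ c) (ha : 0 ≤ a) (hb : 0 ≤ b)
    (h : a ≤ c * (√a * √b)) : a ≤ c ^ 2 * b := by
  have hroot : √a ≤ c * √b := by
    rcases (Real.sqrt_nonneg a).eq_or_lt with h' | h'
    · rw [← h']
      positivity
    · refine le_of_mul_le_mul_left ?_ h'
      rw [Real.mul_self_sqrt ha]
      linarith
  calc a = √a ^ 2 := (Real.sq_sqrt ha).symm
    _ ≤ (c * √b) ^ 2 := by gcongr
    _ = c ^ 2 * b := by rw [mul_pow, Real.sq_sqrt hb]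

section Projection

variable {μ : (∀ i, V i) → ℝ} {ε : ℝ} {A B : Finset (Fin k)} {x : ∀ i, V i} {i : Fin k}
  {f h : (∀ i, V i) → ℝ}

lemma normSq_Aop_le (hμ : IsProb μ) : normSq μ (Aop μ A f) ≤ normSq μ f := by
  have h := var_Aop_le hμ (D := A) (F := f)
  rw [var, var, expect_Aop hμ.1] at h
  exact (sub_le_sub_iff_right _).1 h

lemma var_Aop_singleton_cond_le (hμ : IsProb μ) (hprod : EpsProduct μ ε) (hε : 0 ≤ ε)
    (hm : 0 < marg μ B x) (hiA : i ∉ A) (hiB : i ∉ B) (hh : Junta A h) :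
    var (cond μ B x) (Aop (cond μ B x) {i} h) ≤ (A.card * ε) ^ 2 * var (cond μ B x) h := by
  have hν := isProb_cond hμ.1 hm
  obtain ⟨u, hu⟩ := exists_eq_comp_eval_of_junta_singleton
    (junta_Aop (μ := cond μ B x) (B := {i}) (F := h))
  have hcov := abs_cov_cond_le hμ hprod hε u (A \ B) disjoint_sdiff hm hiB
    (fun h' => hiA (mem_sdiff.1 h').1)
    (hh.mono (by rw [union_sdiff_self_eq_union]; exact subset_union_right))
  rw [← hu, cov_Aop_left_self hν.1] at hcov
  have hcard : ((A \ B).card : ℝ) ≤ A.card := by exact_mod_cast card_le_card sdiff_subset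
  refine le_sq_mul_of_le_mul_sqrt_mul_sqrt (by positivity) (var_nonneg hν) (var_nonneg hν)
    ((le_abs_self _).trans (hcov.trans ?_))
  gcongr

lemma normSq_Aop_insert_sub_Aop_le (hμ : IsProb μ) (hprod : EpsProduct μ ε) (hε : 0 ≤ ε)
    (hiA : i ∉ A) (hiB : i ∉ B) (hh : Junta A h) :
    normSq μ (fun z => Aop μ (insert i B) h z - Aop μ B h z) ≤ (A.card * ε) ^ 2 * normSq μ h := by
  change expect μ _ ≤ _ * expect μ _
  rw [← expect_Aop hμ.1 (B := B), ← expect_Aop hμ.1 (B := B) (F := fun z => h z ^ 2),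
    ← expect_const_mul]
  refine expect_mono hμ.1 fun x hx => ?_
  have hm := marg_pos hμ.1 hx (B := B)
  have hν := isProb_cond hμ.1 hm
  have hcentre : ∀ z, cond μ B x z ≠ 0 → Aop μ (insert i B) h z - Aop μ B h z =
      Aop (cond μ B x) {i} h z - expect (cond μ B x) (Aop (cond μ B x) {i} h) := by
    intro z hz
    have hzx := (cond_ne_zero hz).1
    rw [expect_Aop hν.1, ← union_singleton, Aop_eq_expect, ← cond_cond hm hzx, junta_Aop z x hzx]
    rfl
  calc Aop μ B (fun z => (Aop μ (insert i B) h z - Aop μ B h z) ^ 2) x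
      = var (cond μ B x) (Aop (cond μ B x) {i} h) := by
        rw [Aop_eq_expect, ← expect_sub_expect_sq hν]
        exact expect_congr fun z hz => by rw [hcentre z hz]
    _ ≤ (A.card * ε) ^ 2 * var (cond μ B x) h :=
        var_Aop_singleton_cond_le hμ hprod hε hm hiA hiB hh
    _ ≤ (A.card * ε) ^ 2 * Aop μ B (fun z => h z ^ 2) x := by
        gcongr
        exact var_le_expect_sq

lemma abs_inner'_Aop_insert_sub_Aop_le (hμ : IsProb μ) (hprod : EpsProduct μ ε) (hε : 0 ≤ ε)
    (hiA : i ∉ A) (hiB : i ∉ B) (hh : Junta A h) (g : (∀ i, V i) → ℝ) :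
    |inner' μ h (fun z => Aop μ (insert i B) g z - Aop μ B g z)| ≤
      A.card * ε * (l2norm μ h * l2norm μ g) := by
  have hswap : inner' μ h (fun z => Aop μ (insert i B) g z - Aop μ B g z) =
      expect μ (fun z => (Aop μ (insert i B) h z - Aop μ B h z) * g z) := by
    change expect μ (fun z => h z * (Aop μ (insert i B) g z - Aop μ B g z)) = _
    simp only [sub_mul, mul_sub, expect_sub, expect_Aop_mul hμ.1]
  rw [hswap]
  refine (abs_expect_mul_le hμ.1).trans ?_
  calc √(normSq μ (fun z => Aop μ (insert i B) h z - Aop μ B h z)) * l2norm μ g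
      ≤ √((A.card * ε) ^ 2 * normSq μ h) * l2norm μ g := by
        exact mul_le_mul_of_nonneg_right
          (Real.sqrt_le_sqrt (normSq_Aop_insert_sub_Aop_le hμ hprod hε hiA hiB hh))
          (Real.sqrt_nonneg _)
    _ = A.card * ε * (l2norm μ h * l2norm μ g) := by
        rw [Real.sqrt_mul (sq_nonneg _), Real.sqrt_sq (by positivity), l2norm, mul_assoc]
        rfl

end Projection

section EfronStein

variable {μ : (∀ i, V i) → ℝ} {ε : ℝ} {S t : Finset (Fin k)} {i : Fin k}

omit [∀ i, DecidableEq (V i)] in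
lemma inner'_comm (F G : (∀ i, V i) → ℝ) : inner' μ F G = inner' μ G F := by
  simp only [inner', mul_comm (F _)]

omit [∀ i, DecidableEq (V i)] in
lemma inner'_sum_mul_sum {ι κ : Type*} (s : Finset ι) (s' : Finset κ) (c : ι → ℝ) (d : κ → ℝ)
    (F : ι → (∀ i, V i) → ℝ) (G : κ → (∀ i, V i) → ℝ) :
    inner' μ (fun x => ∑ a ∈ s, c a * F a x) (fun x => ∑ b ∈ s', d b * G b x) =
      ∑ a ∈ s, ∑ b ∈ s', c a * d b * inner' μ (F a) (G b) := by
  simp only [inner', mul_sum]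
  calc _ = ∑ x, ∑ a ∈ s, ∑ b ∈ s', c a * d b * (μ x * (F a x * G b x)) :=
        sum_congr rfl fun x _ => by
          simp only [sum_mul, mul_sum]
          rw [sum_comm]
          exact sum_congr rfl fun a _ => sum_congr rfl fun b _ => by ring
    _ = _ := by
        rw [sum_comm]
        exact sum_congr rfl fun a _ => sum_comm

lemma abs_sum_sum_sign_mul_le {ι κ : Type*} (s : Finset ι) (s' : Finset κ) (m : ι → ℕ)
    (n : κ → ℕ) (X : ι → κ → ℝ) {M : ℝ} (hX : ∀ a ∈ s, ∀ b ∈ s', |X a b| ≤ M) :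
    |∑ a ∈ s, ∑ b ∈ s', (-1 : ℝ) ^ m a * (-1) ^ n b * X a b| ≤ s.card * (s'.card * M) := by
  calc _ ≤ ∑ a ∈ s, ∑ b ∈ s', |(-1 : ℝ) ^ m a * (-1) ^ n b * X a b| :=
        (abs_sum_le_sum_abs _ _).trans (sum_le_sum fun a _ => abs_sum_le_sum_abs _ _)
    _ ≤ ∑ a ∈ s, ∑ b ∈ s', M :=
        sum_le_sum fun a ha => sum_le_sum fun b hb => by simpa [abs_mul] using hX a ha b hb
    _ = _ := by simp

lemma ES_insert (hit : i ∉ t) (g : (∀ i, V i) → ℝ) (x : ∀ i, V i) :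
    ES μ (insert i t) g x = ∑ B ∈ t.powerset,
      (-1 : ℝ) ^ (t.card - B.card) * (Aop μ (insert i B) g x - Aop μ B g x) := by
  rw [ES, sum_powerset_insert hit, ← sum_add_distrib]
  refine sum_congr rfl fun B hB => ?_
  have hBt := mem_powerset.1 hB
  rw [card_insert_of_notMem hit, card_insert_of_notMem fun h => hit (hBt h),
    Nat.succ_sub (card_le_card hBt), Nat.add_sub_add_right, pow_succ]
  ring

lemma abs_inner'_ES_ES_insert_le (hμ : IsProb μ) (hprod : EpsProduct μ ε) (hε : 0 ≤ ε)
    (hiS : i ∉ S) (hit : i ∉ t) (f g : (∀ i, V i) → ℝ) :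
    |inner' μ (ES μ S f) (ES μ (insert i t) g)| ≤
      2 ^ S.card * (2 ^ t.card * (S.card * ε * (l2norm μ f * l2norm μ g))) := by
  have hexp := inner'_sum_mul_sum (μ := μ) S.powerset t.powerset
    (fun A => (-1 : ℝ) ^ (S.card - A.card)) (fun B => (-1 : ℝ) ^ (t.card - B.card))
    (fun A => Aop μ A f) (fun B z => Aop μ (insert i B) g z - Aop μ B g z)
  rw [show ES μ (insert i t) g = _ from funext (ES_insert hit g)]
  refine (congrArg abs hexp).trans_le ?_
  have hterm : ∀ A ∈ S.powerset, ∀ B ∈ t.powerset,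
      |inner' μ (Aop μ A f) (fun z => Aop μ (insert i B) g z - Aop μ B g z)| ≤
        S.card * ε * (l2norm μ f * l2norm μ g) := by
    intro A hA B hB
    have hAS := mem_powerset.1 hA
    refine (abs_inner'_Aop_insert_sub_Aop_le hμ hprod hε (fun h => hiS (hAS h))
      (fun h => hit (mem_powerset.1 hB h)) junta_Aop g).trans ?_
    have hcard : (A.card : ℝ) ≤ S.card := by exact_mod_cast card_le_card hAS
    have hnorm : l2norm μ (Aop μ A f) ≤ l2norm μ f := Real.sqrt_le_sqrt (normSq_Aop_le hμ)
    have hg : 0 ≤ l2norm μ g := Real.sqrt_nonneg _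
    have hAf : 0 ≤ l2norm μ (Aop μ A f) := Real.sqrt_nonneg _
    gcongr
  simpa using abs_sum_sum_sign_mul_le S.powerset t.powerset _ _ _ hterm

end EfronStein

lemma two_pow_mul_two_pow_mul_le {s t T : ℕ} (ht : t ≤ T) :
    2 ^ s * (2 ^ t * s) ≤ 2 ^ (2 * s + 2 * T) :=
  calc 2 ^ s * (2 ^ t * s) ≤ 2 ^ s * (2 ^ t * 2 ^ s) := by gcongr; exact Nat.lt_two_pow_self.le
    _ = 2 ^ (s + t + s) := by rw [pow_add, pow_add]; ring
    _ ≤ 2 ^ (2 * s + 2 * T) := Nat.pow_le_pow_right two_pos (by omega)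

theorem statement14_general (k : ℕ)
    (V : Fin k → Type) [∀ i, Fintype (V i)] [∀ i, DecidableEq (V i)]
    (μ : (∀ i, V i) → ℝ) (ε : ℝ) (hε : 0 ≤ ε) (hμ : IsProb μ) (hprod : EpsProduct μ ε)
    (S T : Finset (Fin k)) (hST : S ≠ T) (f g : (∀ i, V i) → ℝ) :
    inner' μ (ES μ S f) (ES μ T g) ≤
      2 ^ (2 * S.card + 2 * T.card) * ε * l2norm μ f * l2norm μ g := by
  wlog hTS : ∃ i ∈ T, i ∉ S generalizing S T f g
  · obtain ⟨i, hiS, hiT⟩ : ∃ i ∈ S, i ∉ T := by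
      by_contra! hSt
      exact hST (Subset.antisymm hSt fun i hi => by_contra fun hiS => hTS ⟨i, hi, hiS⟩)
    rw [inner'_comm, add_comm]
    exact (this T S hST.symm g f ⟨i, hiS, hiT⟩).trans_eq (by ring)
  obtain ⟨i, hiT, hiS⟩ := hTS
  have hbound := abs_inner'_ES_ES_insert_le hμ hprod hε hiS (notMem_erase i T) f g
  rw [insert_erase hiT] at hbound
  have hcount : (2 : ℝ) ^ S.card * (2 ^ (T.erase i).card * S.card) ≤
      2 ^ (2 * S.card + 2 * T.card) := by
    exact_mod_cast two_pow_mul_two_pow_mul_le (card_erase_le (s := T) (a := i))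
  have hf : 0 ≤ l2norm μ f := Real.sqrt_nonneg _
  have hg : 0 ≤ l2norm μ g := Real.sqrt_nonneg _
  calc inner' μ (ES μ S f) (ES μ T g)
      ≤ 2 ^ S.card * (2 ^ (T.erase i).card * S.card) * (ε * l2norm μ f * l2norm μ g) :=
        (le_abs_self _).trans (hbound.trans_eq (by ring))
    _ ≤ 2 ^ (2 * S.card + 2 * T.card) * (ε * l2norm μ f * l2norm μ g) := by gcongr
    _ = _ := by ring

theorem statement14 (k : ℕ) (hk : 1 ≤ k)
    (V : Fin k → Type) [∀ i, Fintype (V i)] [∀ i, DecidableEq (V i)]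
    (μ : (∀ i, V i) → ℝ) (ε : ℝ) (hε : 0 ≤ ε) (hμ : IsProb μ) (hprod : EpsProduct μ ε)
    (S T : Finset (Fin k)) (hST : S ≠ T) (f g : (∀ i, V i) → ℝ) :
    inner' μ (ES μ S f) (ES μ T g) ≤
      2 ^ (2 * S.card + 2 * T.card) * ε * l2norm μ f * l2norm μ g :=
  statement14_general k V μ ε hε hμ hprod S T hST f g

end GLL
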